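/- arXiv:2212.00132 — 3 statements merged into one kernel-verified Lean document; each statement's English description precedes it below -/
import Mathlib

section
/- Let N ≥ 1, γ' > 1 and 0 < α < N − γ'. Suppose m, w : ℝ^N → ℝ with m ≥ 0, ∫ m = M > 0, the kinetic energy K := ∫_{m>0} m |w/m|^{γ'} dx is finite, the potential term ∫ V m dx is finite for V with 0 ≤ V(x) ≤ C_V(1+|x|)^b, and the Riesz energy R := ∬ m(x)m(y)|x−y|^{α−N} dx dy is strictly positive. Then, with m_σ(x) := σ^{-N} m(x/σ) and w_σ(x) := σ^{-N-1} w(x/σ), the energy E(m_σ, w_σ) = σ^{-γ'}K/γ' + ∫ V(σ x) m(x) dx − (σ^{α−N}/2) R tends to −∞ as σ → 0⁺. -/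
/-! Under the mass-preserving dilation the kinetic energy scales like `σ ^ (-γ')` and the Riesz
energy like `σ ^ (α - N)`, while for `σ ≤ 1` the potential energy stays below
`C_V ∫ (1 + |x|) ^ b m`. Since `α - N < -γ' < 0`, the attractive Riesz term dominates as `σ → 0⁺`. -/

open MeasureTheory Real Filter Topology

noncomputable section

abbrev Euc (N : ℕ) := EuclideanSpace ℝ (Fin N)

theorem tendsto_mul_rpow_sub_mul_rpow_nhdsGT_zero_atBot {r s : ℝ} (hs : s < 0) (hsr : s < r)
    (c : ℝ) {d : ℝ} (hd : 0 < d) :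
    Tendsto (fun σ : ℝ => c * σ ^ r - d * σ ^ s) (𝓝[>] 0) atBot := by
  have hpow : Tendsto (fun σ : ℝ => σ ^ (r - s)) (𝓝[>] 0) (𝓝 0) := by
    simpa [zero_rpow (sub_pos.2 hsr).ne'] using
      (continuousAt_rpow_const 0 (r - s) (.inr (sub_pos.2 hsr).le)).tendsto.mono_left
        nhdsWithin_le_nhds
  have hfactor : Tendsto (fun σ : ℝ => c * σ ^ (r - s) - d) (𝓝[>] 0) (𝓝 (-d)) := by
    simpa using (hpow.const_mul c).sub_const d
  refine ((tendsto_rpow_neg_nhdsGT_zero hs).atTop_mul_neg (neg_neg_of_pos hd) hfactor).congr' ?_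
  filter_upwards [self_mem_nhdsWithin] with σ (hσ : 0 < σ)
  rw [rpow_sub hσ]
  field_simp

theorem one_add_norm_smul_rpow_le {E : Type*} [SeminormedAddCommGroup E] [NormedSpace ℝ E]
    {σ b : ℝ} (hσ : |σ| ≤ 1) (hb : 0 ≤ b) (x : E) :
    (1 + ‖σ • x‖) ^ b ≤ (1 + ‖x‖) ^ b := by
  have hnorm : ‖σ • x‖ ≤ ‖x‖ := by
    rw [norm_smul, Real.norm_eq_abs]
    exact mul_le_of_le_one_left (norm_nonneg x) hσ
  exact rpow_le_rpow (by positivity) (by linarith) hb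

theorem integral_comp_smul_mul_le_of_le_rpow {E : Type*} [NormedAddCommGroup E]
    [NormedSpace ℝ E] [MeasurableSpace E] {μ : Measure E} {V m : E → ℝ} {C b σ : ℝ}
    (hσ : |σ| ≤ 1) (hb : 0 ≤ b) (hC : 0 ≤ C) (hV0 : ∀ x, 0 ≤ V x)
    (hV : ∀ x, V x ≤ C * (1 + ‖x‖) ^ b) (hm : ∀ x, 0 ≤ m x)
    (hint : Integrable (fun x => (1 + ‖x‖) ^ b * m x) μ) :
    ∫ x, V (σ • x) * m x ∂μ ≤ C * ∫ x, (1 + ‖x‖) ^ b * m x ∂μ := by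
  rw [← integral_const_mul]
  refine integral_mono_of_nonneg (.of_forall fun x => mul_nonneg (hV0 _) (hm x))
    (hint.const_mul C) (.of_forall fun x => ?_)
  calc V (σ • x) * m x ≤ C * (1 + ‖σ • x‖) ^ b * m x := mul_le_mul_of_nonneg_right (hV _) (hm x)
    _ ≤ C * (1 + ‖x‖) ^ b * m x :=
      mul_le_mul_of_nonneg_right
        (mul_le_mul_of_nonneg_left (one_add_norm_smul_rpow_le hσ hb x) hC) (hm x)
    _ = C * ((1 + ‖x‖) ^ b * m x) := mul_assoc _ _ _

theorem stmt_1_general (N : ℕ) (γ' α b C_V K R : ℝ)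
    (hγ' : 1 < γ') (hαsub : α < (N : ℝ) - γ')
    (hb : 0 < b) (hCV : 0 < C_V)
    (m V : Euc N → ℝ)
    (hm : ∀ x, 0 ≤ m x)
    (hV0 : ∀ x, 0 ≤ V x) (hVub : ∀ x, V x ≤ C_V * (1 + ‖x‖) ^ b)
    (hVmint : Integrable (fun x => (1 + ‖x‖) ^ b * m x))
    (hR0 : 0 < R) :
    Tendsto
      (fun σ : ℝ =>
        σ ^ (-γ') * K / γ' + (∫ x, V (σ • x) * m x) - σ ^ (α - (N : ℝ)) / 2 * R)
      (𝓝[>] (0 : ℝ)) atBot := by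
  have hpotential : ∀ᶠ σ in 𝓝[>] (0 : ℝ),
      ∫ x, V (σ • x) * m x ≤ C_V * ∫ x, (1 + ‖x‖) ^ b * m x := by
    filter_upwards [Ioc_mem_nhdsGT zero_lt_one] with σ ⟨hσ0, hσ1⟩
    exact integral_comp_smul_mul_le_of_le_rpow (abs_le.2 ⟨by linarith, hσ1⟩) hb.le hCV.le
      hV0 hVub hm hVmint
  have hscaling := tendsto_mul_rpow_sub_mul_rpow_nhdsGT_zero_atBot (r := -γ') (s := α - N)
    (by linarith) (by linarith) (K / γ') (half_pos hR0)
  refine (tendsto_atBot_add_left_of_ge' _ _ hpotential hscaling).congr fun σ => ?_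
  ring

theorem stmt_1 (N : ℕ) (hN : 1 ≤ N) (γ' α b C_V M K R : ℝ)
    (hγ' : 1 < γ') (hα : 0 < α) (hαsub : α < (N : ℝ) - γ')
    (hb : 0 < b) (hCV : 0 < C_V)
    (m w V : Euc N → ℝ)
    (hmmeas : Measurable m) (hVmeas : Measurable V)
    (hm : ∀ x, 0 ≤ m x) (hM0 : 0 < M) (hM : (∫ x, m x) = M)
    (hK : K = ∫ x in {x | 0 < m x}, m x * |w x / m x| ^ γ')
    (hKfin : IntegrableOn (fun x => m x * |w x / m x| ^ γ') {x | 0 < m x})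
    (hV0 : ∀ x, 0 ≤ V x) (hVub : ∀ x, V x ≤ C_V * (1 + ‖x‖) ^ b)
    (hVmint : Integrable (fun x => (1 + ‖x‖) ^ b * m x))
    (hR : R = ∫ x, ∫ y, m x * m y * ‖x - y‖ ^ (α - (N : ℝ))) (hR0 : 0 < R) :
    Tendsto
      (fun σ : ℝ =>
        σ ^ (-γ') * K / γ' + (∫ x, V (σ • x) * m x) - σ ^ (α - (N : ℝ)) / 2 * R)
      (𝓝[>] (0 : ℝ)) atBot :=
  stmt_1_general N γ' α b C_V K R hγ' hαsub hb hCV m V hm hV0 hVub hVmint hR0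
end
end

section
/- Let N ≥ 1, 0 < α < N, M > 0, and let m ∈ L¹(ℝ^N) with m ≥ 0, ∫ m = M, and ‖m‖_{L^∞} ≤ L. Suppose (K_α ∗ m)(0) ≥ C₀ > 0. Then for every R > (2M/C₀)^{1/(N−α)} there exist r > 0 (depending only on C₀, L, N, α) and a constant C₃ > 0 such that ∫_{B_R(0)} m(y) dy ≥ C₃ > 0. Concretely: ∫_{B_R} m(y)|y|^{α−N} dy ≥ C₀/2; moreover choosing r with L·ω·r^α ≤ C₀/4 (ω = ∫_{|z|≤1}|z|^{α−N}dz) gives ∫_{B_R ∖ B_r} m ≥ (C₀/4) r^{N−α}. -/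
open MeasureTheory Real Set
open scoped ENNReal

noncomputable section

lemma aux_integrableOn (N : ℕ) {s : ℝ} (hs : s < 0) (hNs : 0 < (N : ℝ) + s) :
    IntegrableOn (fun z : Euc N => ‖z‖ ^ s) (Metric.closedBall (0 : Euc N) 1) := by
  have hmeas : Measurable fun z : Euc N => ‖z‖ ^ s := by fun_prop
  constructor
  · exact hmeas.aestronglyMeasurable
  · rw [hasFiniteIntegral_iff_ofReal (ae_of_all _ fun z => rpow_nonneg (norm_nonneg z) s)]
    set B := Metric.closedBall (0 : Euc N) 1 with hB
    rw [lintegral_eq_lintegral_meas_le (volume.restrict B)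
      (ae_of_all _ fun z => rpow_nonneg (norm_nonneg z) s) hmeas.aemeasurable]
    set g := fun t : ℝ => (volume.restrict B) {a : Euc N | t ≤ ‖a‖ ^ s} with hg
    have hsub : ∀ t : ℝ, 0 < t →
        {a : Euc N | t ≤ ‖a‖ ^ s} ⊆ Metric.closedBall 0 (t ^ s⁻¹) := by
      intro t ht a ha
      simp only [mem_setOf_eq] at ha
      rw [Metric.mem_closedBall, dist_zero_right]
      rcases eq_or_lt_of_le (norm_nonneg a) with h0 | h0
      · exact le_trans h0.symm.le (rpow_nonneg ht.le _)
      · have := Real.rpow_le_rpow_of_nonpos ht ha (inv_nonpos.2 hs.le)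
        rwa [Real.rpow_rpow_inv (norm_nonneg a) hs.ne] at this

    have hgB : ∀ t : ℝ, g t ≤ volume B := by
      intro t
      calc g t ≤ (volume.restrict B) univ := measure_mono (subset_univ _)
      _ = volume B := by rw [Measure.restrict_apply_univ]
    have hgS : ∀ t : ℝ, 0 < t → g t ≤ volume (Metric.closedBall (0 : Euc N) (t ^ s⁻¹)) := by
      intro t ht
      calc g t ≤ volume {a : Euc N | t ≤ ‖a‖ ^ s} := Measure.restrict_le_self _
      _ ≤ _ := measure_mono (hsub t ht)
    calc ∫⁻ t in Ioi (0:ℝ), g t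
        ≤ ∫⁻ t in Ioc (0:ℝ) 1 ∪ Ioi 1, g t := lintegral_mono_set Ioi_subset_Ioc_union_Ioi
      _ ≤ (∫⁻ t in Ioc (0:ℝ) 1, g t) + ∫⁻ t in Ioi (1:ℝ), g t := lintegral_union_le _ _ _
      _ < ∞ := by
        refine ENNReal.add_lt_top.2 ⟨?_, ?_⟩
        · calc (∫⁻ t in Ioc (0:ℝ) 1, g t) ≤ ∫⁻ _ in Ioc (0:ℝ) 1, volume B :=
            lintegral_mono fun t => hgB t
          _ = volume B * volume (Ioc (0:ℝ) 1) := by rw [setLIntegral_const]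
          _ < ∞ := by
              apply ENNReal.mul_lt_top measure_closedBall_lt_top
              simp [Real.volume_Ioc]
        · have hq : s⁻¹ * (N : ℝ) < -1 := by
            rw [inv_mul_eq_div, div_lt_iff_of_neg hs]
            linarith
          have hbd : ∀ t ∈ Ioi (1:ℝ), g t ≤
              ENNReal.ofReal (t ^ (s⁻¹ * (N : ℝ))) * volume (Metric.ball (0 : Euc N) 1) := by
            intro t ht
            have ht0 : (0:ℝ) < t := lt_trans zero_lt_one ht
            refine le_trans (hgS t ht0) ?_
            rw [Measure.addHaar_closedBall _ _ (rpow_nonneg ht0.le _)]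
            rw [← Real.rpow_natCast (t ^ s⁻¹) (Module.finrank ℝ (Euc N)),
              ← Real.rpow_mul ht0.le, finrank_euclideanSpace, Fintype.card_fin]
          calc ∫⁻ t in Ioi (1:ℝ), g t
              ≤ ∫⁻ t in Ioi (1:ℝ), ENNReal.ofReal (t ^ (s⁻¹ * (N : ℝ)))
                  * volume (Metric.ball (0 : Euc N) 1) :=
                setLIntegral_mono' measurableSet_Ioi hbd
            _ = (∫⁻ t in Ioi (1:ℝ), ENNReal.ofReal (t ^ (s⁻¹ * (N : ℝ))))
                  * volume (Metric.ball (0 : Euc N) 1) :=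
                lintegral_mul_const' _ _ measure_ball_lt_top.ne
            _ < ∞ := ENNReal.mul_lt_top
                ((integrableOn_Ioi_rpow_of_lt hq zero_lt_one).setLIntegral_lt_top)
                measure_ball_lt_top

lemma aux_scaling (N : ℕ) (s : ℝ) {r : ℝ} (hr : 0 < r) :
    (∫ y in Metric.closedBall (0 : Euc N) r, ‖y‖ ^ s)
      = r ^ ((N : ℝ) + s) * ∫ z in Metric.closedBall (0 : Euc N) 1, ‖z‖ ^ s := by
  have h := MeasureTheory.Measure.setIntegral_comp_smul_of_pos (volume : Measure (Euc N))
    (fun y : Euc N => ‖y‖ ^ s) (Metric.closedBall (0 : Euc N) 1) hr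
  rw [smul_closedBall' (ne_of_gt hr) (0 : Euc N) 1] at h
  simp only [smul_zero, Real.norm_eq_abs, abs_of_pos hr, mul_one] at h
  have hlhs : (∫ z in Metric.closedBall (0 : Euc N) 1, ‖r • z‖ ^ s)
      = r ^ s * ∫ z in Metric.closedBall (0 : Euc N) 1, ‖z‖ ^ s := by
    rw [← integral_const_mul]
    refine setIntegral_congr_fun measurableSet_closedBall fun z _ => ?_
    rw [norm_smul, Real.norm_eq_abs, abs_of_pos hr,
      Real.mul_rpow hr.le (norm_nonneg z)]
  rw [hlhs] at h
  have hfr : (Module.finrank ℝ (Euc N)) = N := by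
    rw [finrank_euclideanSpace, Fintype.card_fin]
  rw [hfr] at h
  have hrN : (0:ℝ) < r ^ N := pow_pos hr N
  rw [smul_eq_mul] at h
  have : (∫ y in Metric.closedBall (0 : Euc N) r, ‖y‖ ^ s)
      = r ^ N * (r ^ s * ∫ z in Metric.closedBall (0 : Euc N) 1, ‖z‖ ^ s) := by
    rw [h]
    field_simp
  rw [this, ← mul_assoc]
  congr 1
  rw [← Real.rpow_natCast r N, ← Real.rpow_add hr]

theorem stmt_5 (N : ℕ) (hN : 1 ≤ N) (α M L C₀ : ℝ) (hα : 0 < α) (hαN : α < N)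
    (hM : 0 < M) (hL : 0 < L) (hC₀ : 0 < C₀)
    (m : Euc N → ℝ) (hm : ∀ x, 0 ≤ m x) (hmI : Integrable m)
    (hmM : (∫ x, m x) = M) (hmL : ∀ x, m x ≤ L)
    (hRI : Integrable (fun y => m y * ‖y‖ ^ (α - (N : ℝ))))
    (hconv : C₀ ≤ ∫ y, m y * ‖y‖ ^ (α - (N : ℝ))) :
    ∀ R : ℝ, (2 * M / C₀) ^ (1 / ((N : ℝ) - α)) < R →
      C₀ / 2 ≤ (∫ y in Metric.closedBall (0 : Euc N) R, m y * ‖y‖ ^ (α - (N : ℝ))) ∧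
      ∃ r > (0 : ℝ),
        L * (∫ z in Metric.closedBall (0 : Euc N) 1, ‖z‖ ^ (α - (N : ℝ))) * r ^ α
            ≤ C₀ / 4 ∧
        C₀ / 4 * r ^ ((N : ℝ) - α)
            ≤ (∫ y in Metric.closedBall (0 : Euc N) R \ Metric.closedBall 0 r, m y) ∧
        ∃ C₃ > (0 : ℝ), C₃ ≤ ∫ y in Metric.closedBall (0 : Euc N) R, m y := by
  intro R hR
  set s : ℝ := α - (N : ℝ) with hsdef
  have hs : s < 0 := by simp [hsdef]; linarith
  have hNs : 0 < (N : ℝ) + s := by simp [hsdef]; linarith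
  have hNα : 0 < (N : ℝ) - α := by linarith
  have hRpos : 0 < R := lt_of_le_of_lt (rpow_nonneg (by positivity) _) hR
  -- Part one: tail estimate
  have hRpow : 2 * M / C₀ < R ^ ((N:ℝ) - α) := by
    have := Real.rpow_lt_rpow (rpow_nonneg (by positivity) _) hR (by linarith : (0:ℝ) < (N:ℝ) - α)
    rwa [← Real.rpow_mul (by positivity), one_div,
      inv_mul_cancel₀ (ne_of_gt hNα), Real.rpow_one] at this
  have htail : (∫ y in (Metric.closedBall (0 : Euc N) R)ᶜ, m y * ‖y‖ ^ s) ≤ M * R ^ s := by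
    have step1 : (∫ y in (Metric.closedBall (0 : Euc N) R)ᶜ, m y * ‖y‖ ^ s)
        ≤ ∫ y in (Metric.closedBall (0 : Euc N) R)ᶜ, m y * R ^ s := by
      refine setIntegral_mono_on (hRI.integrableOn) ((hmI.mul_const _).integrableOn)
        measurableSet_closedBall.compl fun y hy => ?_
      have hy' : R < ‖y‖ := by
        simpa [Metric.mem_closedBall, dist_zero_right, not_le] using hy
      exact mul_le_mul_of_nonneg_left
        (Real.rpow_le_rpow_of_nonpos hRpos hy'.le hs.le) (hm y)
    have step2 : (∫ y in (Metric.closedBall (0 : Euc N) R)ᶜ, m y * R ^ s) ≤ M * R ^ s := by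
      rw [← hmM]
      have : (∫ y in (Metric.closedBall (0 : Euc N) R)ᶜ, m y * R ^ s)
          = (∫ y in (Metric.closedBall (0 : Euc N) R)ᶜ, m y) * R ^ s := by
        rw [← integral_mul_const]
      rw [this]
      refine mul_le_mul_of_nonneg_right ?_ (rpow_nonneg hRpos.le _)
      exact setIntegral_le_integral hmI (ae_of_all _ hm)
    exact le_trans step1 step2
  have htail' : M * R ^ s < C₀ / 2 := by
    have hRs : R ^ s = (R ^ ((N:ℝ) - α))⁻¹ := by
      rw [← Real.rpow_neg hRpos.le]
      congr 1
      rw [hsdef]; ring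
    rw [hRs]
    have hx : (0:ℝ) < R ^ ((N:ℝ) - α) := by positivity
    rw [div_lt_iff₀ hC₀] at hRpow
    rw [mul_inv_lt_iff₀ hx]
    nlinarith
  have hsplit : (∫ y in Metric.closedBall (0 : Euc N) R, m y * ‖y‖ ^ s)
      + (∫ y in (Metric.closedBall (0 : Euc N) R)ᶜ, m y * ‖y‖ ^ s)
      = ∫ y, m y * ‖y‖ ^ s := integral_add_compl measurableSet_closedBall hRI
  have hmain : C₀ / 2 ≤ ∫ y in Metric.closedBall (0 : Euc N) R, m y * ‖y‖ ^ s := by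
    nlinarith [le_trans htail (le_of_lt htail')]
  refine ⟨hmain, ?_⟩
  -- choose r
  set ω : ℝ := ∫ z in Metric.closedBall (0 : Euc N) 1, ‖z‖ ^ s with hω
  have hω0 : 0 ≤ ω := setIntegral_nonneg measurableSet_closedBall
    fun z _ => rpow_nonneg (norm_nonneg z) s
  set ρ : ℝ := (C₀ / (4 * L * (ω + 1))) ^ α⁻¹ with hρ
  have hρpos : 0 < ρ := rpow_pos_of_pos (by positivity) _
  set r : ℝ := min 1 ρ with hrdef
  have hrpos : 0 < r := lt_min zero_lt_one hρpos
  have hr1 : r ≤ 1 := min_le_left _ _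
  have hrα : r ^ α ≤ C₀ / (4 * L * (ω + 1)) := by
    calc r ^ α ≤ ρ ^ α := Real.rpow_le_rpow hrpos.le (min_le_right _ _) hα.le
    _ = C₀ / (4 * L * (ω + 1)) := by
        rw [hρ, ← Real.rpow_mul (by positivity), inv_mul_cancel₀ (ne_of_gt hα), Real.rpow_one]
  have hLω : L * ω * r ^ α ≤ C₀ / 4 := by
    have h1 : L * ω * r ^ α ≤ L * (ω + 1) * r ^ α := by
      have : (0:ℝ) ≤ r ^ α := rpow_nonneg hrpos.le _
      nlinarith
    have h2 : L * (ω + 1) * r ^ α ≤ L * (ω + 1) * (C₀ / (4 * L * (ω + 1))) :=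
      mul_le_mul_of_nonneg_left hrα (by positivity)
    have h3 : L * (ω + 1) * (C₀ / (4 * L * (ω + 1))) = C₀ / 4 := by
      field_simp
    linarith
  refine ⟨r, hrpos, hLω, ?_⟩
  -- small ball estimate
  have hIω : IntegrableOn (fun z : Euc N => ‖z‖ ^ s) (Metric.closedBall (0 : Euc N) 1) :=
    aux_integrableOn N hs hNs
  have hIr : IntegrableOn (fun z : Euc N => ‖z‖ ^ s) (Metric.closedBall (0 : Euc N) r) :=
    hIω.mono_set (Metric.closedBall_subset_closedBall hr1)
  have hsmall : (∫ y in Metric.closedBall (0 : Euc N) r, m y * ‖y‖ ^ s) ≤ C₀ / 4 := by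
    have step1 : (∫ y in Metric.closedBall (0 : Euc N) r, m y * ‖y‖ ^ s)
        ≤ ∫ y in Metric.closedBall (0 : Euc N) r, L * ‖y‖ ^ s := by
      refine setIntegral_mono_on hRI.integrableOn (hIr.const_mul L)
        measurableSet_closedBall fun y _ => ?_
      exact mul_le_mul_of_nonneg_right (hmL y) (rpow_nonneg (norm_nonneg y) s)
    have step2 : (∫ y in Metric.closedBall (0 : Euc N) r, L * ‖y‖ ^ s)
        = L * (r ^ ((N:ℝ) + s) * ω) := by
      rw [integral_const_mul, aux_scaling N s hrpos]
    have hexp : (N:ℝ) + s = α := by rw [hsdef]; ring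
    rw [step2, hexp] at step1
    calc (∫ y in Metric.closedBall (0 : Euc N) r, m y * ‖y‖ ^ s)
        ≤ L * (r ^ α * ω) := step1
      _ = L * ω * r ^ α := by ring
      _ ≤ C₀ / 4 := hLω
  -- annulus estimate
  set A := Metric.closedBall (0 : Euc N) R \ Metric.closedBall (0 : Euc N) r with hA
  have hAmeas : MeasurableSet A := measurableSet_closedBall.diff measurableSet_closedBall
  have hsplit2 : (∫ y in Metric.closedBall (0 : Euc N) R, m y * ‖y‖ ^ s)
      ≤ (∫ y in A, m y * ‖y‖ ^ s) + ∫ y in Metric.closedBall (0 : Euc N) r, m y * ‖y‖ ^ s := by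
    have hunion : Metric.closedBall (0 : Euc N) R ⊆ A ∪ Metric.closedBall (0 : Euc N) r := by
      intro y hy
      by_cases h : y ∈ Metric.closedBall (0 : Euc N) r
      · exact Or.inr h
      · exact Or.inl ⟨hy, h⟩
    have hnn : ∀ y, 0 ≤ m y * ‖y‖ ^ s := fun y =>
      mul_nonneg (hm y) (rpow_nonneg (norm_nonneg y) s)
    calc (∫ y in Metric.closedBall (0 : Euc N) R, m y * ‖y‖ ^ s)
        ≤ ∫ y in A ∪ Metric.closedBall (0 : Euc N) r, m y * ‖y‖ ^ s :=
          setIntegral_mono_set hRI.integrableOn (ae_of_all _ hnn)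
            (HasSubset.Subset.eventuallyLE hunion)
      _ = _ := by
          refine setIntegral_union ?_ measurableSet_closedBall
            hRI.integrableOn hRI.integrableOn
          exact disjoint_sdiff_self_left
  have hann : C₀ / 4 ≤ ∫ y in A, m y * ‖y‖ ^ s := by linarith
  have hann2 : (∫ y in A, m y * ‖y‖ ^ s) ≤ r ^ s * ∫ y in A, m y := by
    have step1 : (∫ y in A, m y * ‖y‖ ^ s) ≤ ∫ y in A, m y * r ^ s := by
      refine setIntegral_mono_on hRI.integrableOn ((hmI.mul_const _).integrableOn)
        hAmeas fun y hy => ?_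
      have hy' : r < ‖y‖ := by
        have := hy.2
        simpa [Metric.mem_closedBall, dist_zero_right, not_le] using this
      exact mul_le_mul_of_nonneg_left
        (Real.rpow_le_rpow_of_nonpos hrpos hy'.le hs.le) (hm y)
    calc (∫ y in A, m y * ‖y‖ ^ s) ≤ ∫ y in A, m y * r ^ s := step1
      _ = r ^ s * ∫ y in A, m y := by rw [integral_mul_const]; ring
  have hrs_inv : r ^ ((N:ℝ) - α) * r ^ s = 1 := by
    rw [← Real.rpow_add hrpos]
    have : (N:ℝ) - α + s = 0 := by rw [hsdef]; ring
    rw [this, Real.rpow_zero]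
  have hannm : C₀ / 4 * r ^ ((N:ℝ) - α) ≤ ∫ y in A, m y := by
    have h1 : C₀ / 4 ≤ r ^ s * ∫ y in A, m y := le_trans hann hann2
    have h2 : r ^ ((N:ℝ) - α) * (C₀ / 4) ≤ r ^ ((N:ℝ) - α) * (r ^ s * ∫ y in A, m y) :=
      mul_le_mul_of_nonneg_left h1 (rpow_nonneg hrpos.le _)
    calc C₀ / 4 * r ^ ((N:ℝ) - α) = r ^ ((N:ℝ) - α) * (C₀ / 4) := by ring
      _ ≤ r ^ ((N:ℝ) - α) * (r ^ s * ∫ y in A, m y) := h2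
      _ = (r ^ ((N:ℝ) - α) * r ^ s) * ∫ y in A, m y := by ring
      _ = ∫ y in A, m y := by rw [hrs_inv, one_mul]
  refine ⟨hannm, ⟨C₀ / 4 * r ^ ((N:ℝ) - α), by positivity, ?_⟩⟩
  refine le_trans hannm ?_
  refine setIntegral_mono_set hmI.integrableOn (ae_of_all _ hm) ?_
  exact HasSubset.Subset.eventuallyLE diff_subset
end
end

section
/- Let e : (0,∞) → ℝ be a function and suppose there is a family of constants C₂(B) > 0 such that e(cB) < c e(B) − c(c−1)C₂(B)/2 for all c > 1, B > 0. Then for every M > 0 and all a ∈ [M/2, M): e(M) < e(a) + e(M−a) − C for the constant C = (M/a)((M/a)−1)C₂(a)/2 > 0. -/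
theorem stmt_12 (e C₂ : ℝ → ℝ) (hC₂ : ∀ B : ℝ, 0 < B → 0 < C₂ B)
    (hscale : ∀ B c : ℝ, 0 < B → 1 < c →
      e (c * B) < c * e B - c * (c - 1) * C₂ B / 2) :
    ∀ M a : ℝ, 0 < M → M / 2 ≤ a → a < M →
      0 < M / a * (M / a - 1) * C₂ a / 2 ∧
      e M < e a + e (M - a) - M / a * (M / a - 1) * C₂ a / 2 := by
  intro M a hM hha hma
  have ha : 0 < a := lt_of_lt_of_le (by linarith) hha
  have hMa : 0 < M - a := by linarith
  set c := M / a with hcdef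
  have hc1 : 1 < c := (one_lt_div ha).2 hma
  have hCa := hC₂ a ha
  have hc0 : 0 < c := by linarith
  have hcm1 : 0 < c - 1 := by linarith
  constructor
  · have := mul_pos (mul_pos hc0 hcm1) hCa
    linarith
  · have h1 := hscale a c ha hc1
    rw [show c * a = M from div_mul_cancel₀ M ha.ne'] at h1
    have hsplit : c * e a = e a + (c - 1) * e a := by ring
    have hkey : (c - 1) * e a ≤ e (M - a) := by
      rcases eq_or_lt_of_le hha with heq | hlt
      · have ha2 : a = M - a := by linarith
        have hc2 : c = 2 := by
          rw [hcdef, div_eq_iff ha.ne']; linarith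
        rw [hc2, ← ha2]; ring_nf; exact le_refl _
      · set c' := a / (M - a) with hc'def
        have hc'1 : 1 < c' := (one_lt_div hMa).2 (by linarith)
        have hc'0 : 0 < c' := by linarith
        have h2 := hscale (M - a) c' hMa hc'1
        rw [show c' * (M - a) = a from div_mul_cancel₀ a hMa.ne'] at h2
        have hCb := hC₂ (M - a) hMa
        have hpos : 0 < c' * (c' - 1) * C₂ (M - a) / 2 := by
          have := mul_pos (mul_pos hc'0 (by linarith : (0:ℝ) < c' - 1)) hCb
          linarith
        have hea : e a < c' * e (M - a) := by linarith
        have hmul : (c - 1) * c' = 1 := by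
          rw [hcdef, hc'def]; field_simp
        have h3 := mul_lt_mul_of_pos_left hea hcm1
        have h4 : (c - 1) * (c' * e (M - a)) = e (M - a) := by
          rw [← mul_assoc, hmul, one_mul]
        linarith
    linarith
end
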